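/- arXiv:math/9905195 — 4 statements merged into one kernel-verified Lean document; each statement's English description precedes it below -/
import Mathlib

section
/- Let k be a field of characteristic not 2 or 3, and let S ∈ k[t] be a polynomial of degree 6 with no repeated roots. If x, y ∈ k[t] satisfy y² = x³ + S, then x and S have no common root (in any field extension of k). -/
open Polynomial

/-- If `y² = x³ + S` with `S` squarefree of degree 6 over a field of characteristic
not 2 or 3, then `x` and `S` have no common root in any field extension. -/
theorem stmt0 {k : Type*} [Field k]
    (h2 : ringChar k ≠ 2) (h3 : ringChar k ≠ 3)
    (S x y : k[X]) (hS6 : S.degree = 6) (hSsf : Squarefree S)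
    (heq : y ^ 2 = x ^ 3 + S)
    (K : Type*) [Field K] (f : k →+* K) (a : K) :
    ¬ (Polynomial.eval₂ f a x = 0 ∧ Polynomial.eval₂ f a S = 0) := by
  classical
  rintro ⟨hx, hS⟩
  -- First show x and S are coprime in k[X].
  have hcop : IsCoprime x S := by
    by_contra hnc
    rw [← EuclideanDomain.gcd_isUnit_iff] at hnc
    have hg0 : EuclideanDomain.gcd x S ≠ 0 := by
      intro h0
      exact hSsf.ne_zero (by
        have := EuclideanDomain.gcd_eq_zero_iff.mp h0
        exact this.2)
    obtain ⟨p, hp, hpd⟩ := WfDvdMonoid.exists_irreducible_factor hnc hg0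
    have hpx : p ∣ x := hpd.trans (EuclideanDomain.gcd_dvd_left x S)
    have hpS : p ∣ S := hpd.trans (EuclideanDomain.gcd_dvd_right x S)
    have hpy2 : p ∣ y ^ 2 := heq ▸ dvd_add (hpx.trans (dvd_pow_self x (by norm_num))) hpS
    have hpy : p ∣ y := hp.prime.dvd_of_dvd_pow hpy2
    have hp2S : p * p ∣ S := by
      have h1 : p * p ∣ y ^ 2 := by
        rw [sq]; exact mul_dvd_mul hpy hpy
      have h2 : p * p ∣ x ^ 3 := by
        calc p * p ∣ x * x := mul_dvd_mul hpx hpx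
        _ ∣ x ^ 3 := by rw [← sq]; exact pow_dvd_pow x (by norm_num)
      have : S = y ^ 2 - x ^ 3 := by rw [heq]; ring
      rw [this]; exact dvd_sub h1 h2
    exact hp.not_isUnit (hSsf p hp2S)
  obtain ⟨u, v, huv⟩ := hcop
  have := congrArg (Polynomial.eval₂RingHom f a) huv
  simp only [map_add, map_mul, map_one, coe_eval₂RingHom] at this
  rw [hx, hS, mul_zero, mul_zero, add_zero] at this
  exact zero_ne_one this
end

section
/- Let k be a field of characteristic not 2 or 3, and let S ∈ k[t] be a polynomial of degree 6 with no repeated roots. If x, y ∈ k[t] satisfy y² = x³ + S, then y and S have no common root (in any field extension of k). -/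
open Polynomial

/-- If `y² = x³ + S` with `S` squarefree of degree 6 over a field of characteristic
not 2 or 3, then `y` and `S` have no common root in any field extension. -/
theorem stmt1 {k : Type*} [Field k]
    (h2 : ringChar k ≠ 2) (h3 : ringChar k ≠ 3)
    (S x y : k[X]) (hS6 : S.degree = 6) (hSsf : Squarefree S)
    (heq : y ^ 2 = x ^ 3 + S)
    (K : Type*) [Field K] (f : k →+* K) (a : K) :
    ¬ (Polynomial.eval₂ f a y = 0 ∧ Polynomial.eval₂ f a S = 0) := by
  rintro ⟨hy, hS⟩
  set I := RingHom.ker (eval₂RingHom f a) with hI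
  have hprime : I.IsPrime := RingHom.ker_isPrime _
  have hyI : y ∈ I := by simpa [hI, RingHom.mem_ker] using hy
  have hSI : S ∈ I := by simpa [hI, RingHom.mem_ker] using hS
  have hx3 : x ^ 3 = y ^ 2 - S := by rw [heq]; ring
  have hx3I : x ^ 3 ∈ I := by
    rw [hx3]; exact Ideal.sub_mem I (Ideal.pow_mem_of_mem I hyI 2 (by norm_num)) hSI
  have hxI : x ∈ I := hprime.mem_of_pow_mem 3 hx3I
  obtain ⟨p, hpI⟩ := (IsPrincipalIdealRing.principal I).principal
  rw [hpI] at hyI hxI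
  have hpy : p ∣ y := Ideal.mem_span_singleton.mp hyI
  have hpx : p ∣ x := Ideal.mem_span_singleton.mp hxI
  have hpS : p * p ∣ S := by
    have h1 : p * p ∣ y ^ 2 := by
      rw [← pow_two]; exact pow_dvd_pow_of_dvd hpy 2
    have h2 : p * p ∣ x ^ 3 := by
      rw [← pow_two]
      exact (pow_dvd_pow p (by norm_num)).trans (pow_dvd_pow_of_dvd hpx 3)
    have : S = y ^ 2 - x ^ 3 := by rw [heq]; ring
    rw [this]; exact dvd_sub h1 h2
  have hu : IsUnit p := hSsf p hpS
  have h1I : (1 : k[X]) ∈ I := by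
    rw [hpI]
    exact Ideal.mem_span_singleton.mpr hu.dvd
  have : (1 : K) = 0 := by simpa [hI, RingHom.mem_ker] using h1I
  exact one_ne_zero this
end

section
/- Let L be a ℤ[ρ]-lattice (ρ a primitive cube root of unity acting by isometries of order 3 with no nonzero fixed vectors) whose underlying ℤ-lattice is even with minimal norm 2. If r, r' are roots with r' ∉ {r, ρr, ρ²r}, then r and r' are not congruent modulo √−3·L, where √−3 = ρ − ρ² acts on L. Consequently each nonzero coset of L/√−3·L contains at most the triple {r, ρr, ρ²r} of roots. -/
/-- Let `L` be a positive-definite even lattice of minimal norm 2 with an isometry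
`ρ` of order 3 satisfying `ρ² + ρ + 1 = 0` (so with no nonzero fixed vectors).
If `r, r'` are roots with `r' ∉ {r, ρr, ρ²r}` then `r` and `r'` are not congruent
modulo `√−3·L`, where `√−3 = ρ − ρ²`; hence each nonzero coset of `L/√−3·L`
contains at most the triple `{r, ρr, ρ²r}` of roots. -/
theorem stmt9 {M : Type*} [AddCommGroup M] [Module ℤ M]
    [Module.Free ℤ M] [Module.Finite ℤ M]
    (B : M →ₗ[ℤ] M →ₗ[ℤ] ℤ)
    (hsymm : ∀ v w, B v w = B w v)
    (heven : ∀ v, Even (B v v))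
    (hpos : ∀ v, v ≠ 0 → 0 < B v v)
    (hmin : ∀ v, v ≠ 0 → 2 ≤ B v v)
    (ρ : M →ₗ[ℤ] M)
    (hisom : ∀ v w, B (ρ v) (ρ w) = B v w)
    (hquad : ∀ v, ρ (ρ v) + ρ v + v = 0)
    (hfix : ∀ v, ρ v = v → v = 0)
    (r r' : M) (hr : B r r = 2) (hr' : B r' r' = 2)
    (h1 : r' ≠ r) (h2 : r' ≠ ρ r) (h3 : r' ≠ ρ (ρ r)) :
    ¬ ∃ z : M, r - r' = ρ z - ρ (ρ z) := by
  -- ρ³ = 1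
  have hcube : ∀ v : M, ρ (ρ (ρ v)) = v := by
    intro v
    have hv := hquad v
    have hρv := hquad (ρ v)
    have key : ρ (ρ (ρ v)) - v
        = (ρ (ρ (ρ v)) + ρ (ρ v) + ρ v) - (ρ (ρ v) + ρ v + v) := by abel
    rw [hv, hρv, sub_zero] at key
    exact sub_eq_zero.mp key
  -- norm of √−3 · a equals 3 |a|²
  have hnorm3 : ∀ a : M, B (ρ a - ρ (ρ a)) (ρ a - ρ (ρ a)) = 3 * B a a := by
    intro a
    have e1 : B (ρ a) (ρ a) = B a a := hisom a a
    have e2 : B (ρ (ρ a)) (ρ (ρ a)) = B a a := by rw [hisom, hisom]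
    have e3 : B (ρ a) (ρ (ρ a)) = B a (ρ a) := hisom a (ρ a)
    have e4 : B (ρ (ρ a)) (ρ a) = B (ρ a) a := hisom (ρ a) a
    have h6 : B a (ρ (ρ a)) = B a (ρ a) := by
      have h7 := hisom (ρ a) (ρ (ρ a))
      rw [hcube a] at h7
      rw [hsymm a (ρ (ρ a)), h7, e3]
    have e5 : 2 * B a (ρ a) + B a a = 0 := by
      have h0 : B a (ρ (ρ a) + ρ a + a) = 0 := by rw [hquad a]; simp
      simp only [map_add] at h0
      linarith [h0, h6]
    have hsym2 : B (ρ a) a = B a (ρ a) := hsymm (ρ a) a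
    simp only [map_sub, LinearMap.sub_apply]
    linarith
  rintro ⟨z, hz⟩
  set b := z - ρ (ρ r) with hb
  set c := z - ρ (ρ r) - r with hc
  -- the two companion congruences
  have hρb : ρ b = ρ z - r := by rw [hb, map_sub, hcube r]
  have hρρb : ρ (ρ b) = ρ (ρ z) - ρ r := by rw [hρb]; exact map_sub ρ (ρ z) r
  have hbz : ρ b - ρ (ρ b) = ρ r - r' := by
    have e : ρ b - ρ (ρ b) = (ρ z - ρ (ρ z)) - r + ρ r := by rw [hρρb, hρb]; abel
    rw [e, ← hz]; abel
  have hρc : ρ c = ρ b - ρ r := by rw [hc, hb]; simp [map_sub]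
  have hρρc : ρ (ρ c) = ρ (ρ b) - ρ (ρ r) := by rw [hρc]; exact map_sub ρ (ρ b) (ρ r)
  have hcz : ρ c - ρ (ρ c) = ρ (ρ r) - r' := by
    have e : ρ c - ρ (ρ c) = (ρ b - ρ (ρ b)) - ρ r + ρ (ρ r) := by
      rw [hρρc, hρc]; abel
    rw [e, hbz]; abel
  -- norms of the three differences
  have n1 : B (r - r') (r - r') = 3 * B z z := by rw [hz]; exact hnorm3 z
  have n2 : B (ρ r - r') (ρ r - r') = 3 * B b b := by rw [← hbz]; exact hnorm3 b
  have n3 : B (ρ (ρ r) - r') (ρ (ρ r) - r') = 3 * B c c := by rw [← hcz]; exact hnorm3 c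
  -- sum of the three norms is 12
  have hρr : B (ρ r) (ρ r) = 2 := by rw [hisom]; exact hr
  have hρρr : B (ρ (ρ r)) (ρ (ρ r)) = 2 := by rw [hisom, hisom]; exact hr
  have hzero : B (ρ (ρ r)) r' + B (ρ r) r' + B r r' = 0 := by
    have h0 : B (ρ (ρ r) + ρ r + r) r' = 0 := by rw [hquad r]; simp
    simpa [map_add, LinearMap.add_apply] using h0
  have s1 : B r' r = B r r' := hsymm r' r
  have s2 : B r' (ρ r) = B (ρ r) r' := hsymm r' (ρ r)
  have s3 : B r' (ρ (ρ r)) = B (ρ (ρ r)) r' := hsymm r' (ρ (ρ r))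
  simp only [map_sub, LinearMap.sub_apply] at n1 n2 n3
  -- nonvanishing
  have hz0 : z ≠ 0 := by
    rintro rfl
    simp only [map_zero, sub_zero] at hz
    exact h1 (sub_eq_zero.mp hz).symm
  have hb0 : b ≠ 0 := by
    rintro h
    rw [h] at hbz
    simp only [map_zero, sub_zero] at hbz
    exact h2 (sub_eq_zero.mp hbz.symm).symm
  have hc0 : c ≠ 0 := by
    rintro h
    rw [h] at hcz
    simp only [map_zero, sub_zero] at hcz
    exact h3 (sub_eq_zero.mp hcz.symm).symm
  have m1 := hmin z hz0
  have m2 := hmin b hb0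
  have m3 := hmin c hc0
  linarith
end

section
/- Consider 6-tuples (σ₁,…,σ₆) of transpositions in the symmetric group S₃ with σ₁σ₂⋯σ₆ = 1. There are exactly 3⁵ = 243 such tuples; exactly 3 of them are constant tuples (all six σᵢ equal); and the remaining 240 tuples each generate all of S₃. Consequently the number of orbits of the 240 generating tuples under simultaneous conjugation by S₃ is 240/6 = 40. -/
open Equiv

private abbrev G3 := Equiv.Perm (Fin 3)

private instance : DecidablePred (Equiv.Perm.IsSwap : G3 → Prop) := fun f =>
  decidable_of_iff (∃ x y, x ≠ y ∧ f = Equiv.swap x y) Iff.rfl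

private abbrev Swp := {s : G3 // s.IsSwap}

private lemma sign_neg_isSwap : ∀ g : G3, Equiv.Perm.sign g = -1 → g.IsSwap := by decide

private def e243 : {σ : Fin 6 → G3 // (∀ i, (σ i).IsSwap) ∧ (List.ofFn σ).prod = 1} ≃
    (Fin 5 → Swp) where
  toFun σ := fun i => ⟨σ.1 i.castSucc, σ.2.1 _⟩
  invFun τ := ⟨Fin.snoc (fun i => (τ i).1) ((List.ofFn fun i => (τ i).1).prod)⁻¹, by
    constructor
    · intro i
      refine Fin.lastCases ?_ ?_ i
      · rw [Fin.snoc_last]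
        apply sign_neg_isSwap
        rw [map_inv]
        have : Equiv.Perm.sign (List.ofFn fun i => (τ i).1).prod = -1 := by
          rw [show (List.ofFn fun i => (τ i).1) = [(τ 0).1, (τ 1).1, (τ 2).1, (τ 3).1, (τ 4).1]
            from rfl]
          simp [(τ _).2.sign_eq]
        rw [this]; rfl
      · intro i; rw [Fin.snoc_castSucc]; exact (τ i).2
    · rw [List.ofFn_succ' , List.concat_eq_append, List.prod_append]
      simp only [Fin.snoc_castSucc, Fin.snoc_last, List.prod_cons, List.prod_nil]
      group⟩
  left_inv σ := by
    apply Subtype.ext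
    dsimp only
    funext i
    refine Fin.lastCases ?_ ?_ i
    · rw [Fin.snoc_last]
      have h := σ.2.2
      rw [List.ofFn_succ', List.concat_eq_append, List.prod_append] at h
      simp only [List.prod_cons, List.prod_nil, mul_one] at h
      rw [eq_inv_of_mul_eq_one_left h, inv_inv]
    · intro i; rw [Fin.snoc_castSucc]
  right_inv τ := by
    funext i
    apply Subtype.ext
    dsimp only
    rw [Fin.snoc_castSucc]

private lemma card243 :
    Nat.card {σ : Fin 6 → G3 // (∀ i, (σ i).IsSwap) ∧ (List.ofFn σ).prod = 1} = 243 := by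
  rw [Nat.card_congr e243, Nat.card_eq_fintype_card, Fintype.card_fun]
  rw [show Fintype.card Swp = 3 by decide]
  rfl

private lemma swap_sq : ∀ s : G3, s.IsSwap → s * s = 1 := by decide

private def e3 : {σ : Fin 6 → G3 //
    (∀ i, (σ i).IsSwap) ∧ (List.ofFn σ).prod = 1 ∧ ∃ c, ∀ i, σ i = c} ≃ Swp where
  toFun σ := ⟨σ.1 0, σ.2.1 0⟩
  invFun s := ⟨fun _ => s.1, fun _ => s.2, by
      rw [show (List.ofFn fun _ : Fin 6 => s.1) = [s.1, s.1, s.1, s.1, s.1, s.1] from rfl]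
      simp [List.prod_cons, swap_sq s.1 s.2, mul_assoc], s.1, fun _ => rfl⟩
  left_inv σ := by
    apply Subtype.ext; dsimp only; funext i
    obtain ⟨c, hc⟩ := σ.2.2.2
    rw [hc i, hc 0]
  right_inv s := rfl

private lemma card3 : Nat.card {σ : Fin 6 → G3 //
    (∀ i, (σ i).IsSwap) ∧ (List.ofFn σ).prod = 1 ∧ ∃ c, ∀ i, σ i = c} = 3 := by
  rw [Nat.card_congr e3, Nat.card_eq_fintype_card]
  decide

private lemma six_elems : ∀ g a b : G3, a.IsSwap → b.IsSwap → a ≠ b →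
    g = 1 ∨ g = a ∨ g = b ∨ g = a*b ∨ g = b*a ∨ g = a*b*a := by decide

private lemma part3 (σ : Fin 6 → G3) (h1 : ∀ i, (σ i).IsSwap)
    (h3 : ¬ ∃ c, ∀ i, σ i = c) :
    Subgroup.closure (Set.range σ) = (⊤ : Subgroup G3) := by
  push_neg at h3
  obtain ⟨i, hi⟩ := h3 (σ 0)
  rw [eq_top_iff]
  intro g _
  have ha : σ 0 ∈ Subgroup.closure (Set.range σ) := Subgroup.subset_closure ⟨0, rfl⟩
  have hb : σ i ∈ Subgroup.closure (Set.range σ) := Subgroup.subset_closure ⟨i, rfl⟩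
  rcases six_elems g (σ 0) (σ i) (h1 0) (h1 i) (Ne.symm hi) with h|h|h|h|h|h <;> subst h
  · exact one_mem _
  · exact ha
  · exact hb
  · exact mul_mem ha hb
  · exact mul_mem hb ha
  · exact mul_mem (mul_mem ha hb) ha

private def cnj (g : G3) (σ : Fin 6 → G3) : Fin 6 → G3 := fun i => g * σ i * g⁻¹

private lemma cnj_one (σ : Fin 6 → G3) : cnj 1 σ = σ := by funext i; simp [cnj]

private lemma cnj_cnj (g h : G3) (σ : Fin 6 → G3) : cnj g (cnj h σ) = cnj (g*h) σ := by
  funext i; simp [cnj, mul_assoc]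

private def Q (σ : Fin 6 → G3) : Prop :=
  (∀ i, (σ i).IsSwap) ∧ (List.ofFn σ).prod = 1 ∧ ¬ ∃ c, ∀ i, σ i = c

private lemma isSwap_conj {s : G3} (g : G3) (h : s.IsSwap) : (g * s * g⁻¹).IsSwap := by
  obtain ⟨x, y, hxy, rfl⟩ := h
  exact ⟨g x, g y, fun he => hxy (g.injective he), by
    rw [← Equiv.swap_apply_apply]⟩

private lemma conj_list_prod (g : G3) (l : List G3) :
    (l.map fun x => g * x * g⁻¹).prod = g * l.prod * g⁻¹ := by
  induction l with
  | nil => simp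
  | cons a l ih => simp only [List.map_cons, List.prod_cons, ih]; group

private lemma prod_cnj (g : G3) (σ : Fin 6 → G3) :
    (List.ofFn (cnj g σ)).prod = g * (List.ofFn σ).prod * g⁻¹ := by
  have : List.ofFn (cnj g σ) = (List.ofFn σ).map (fun x => g * x * g⁻¹) := by
    rw [List.map_ofFn]; rfl
  rw [this, conj_list_prod]

private lemma Q_cnj {σ : Fin 6 → G3} (g : G3) (h : Q σ) : Q (cnj g σ) := by
  obtain ⟨h1, h2, h3⟩ := h
  refine ⟨fun i => isSwap_conj g (h1 i), by rw [prod_cnj, h2]; group, ?_⟩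
  rintro ⟨c, hc⟩
  exact h3 ⟨g⁻¹ * c * g, fun i => by
    have := hc i
    simp only [cnj] at this
    rw [← this]; group⟩

private lemma center_triv : ∀ z : G3, (∀ x, z * x = x * z) → z = 1 := by decide

private lemma free {σ : Fin 6 → G3} (hQ : Q σ) {g h : G3} (he : cnj g σ = cnj h σ) :
    g = h := by
  have hz : ∀ i, (h⁻¹ * g) * σ i = σ i * (h⁻¹ * g) := by
    intro i
    have := congrFun he i
    simp only [cnj] at this
    have : h⁻¹ * (g * σ i * g⁻¹) * h = σ i := by rw [this]; group
    calc (h⁻¹ * g) * σ i = (h⁻¹ * (g * σ i * g⁻¹) * h) * (h⁻¹ * g) := by group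
    _ = σ i * (h⁻¹ * g) := by rw [this]
  have hcomm : ∀ x : G3, (h⁻¹ * g) * x = x * (h⁻¹ * g) := by
    intro x
    have hx : x ∈ Subgroup.closure (Set.range σ) := by
      rw [part3 σ hQ.1 hQ.2.2]; trivial
    induction hx using Subgroup.closure_induction with
    | mem y hy => obtain ⟨i, rfl⟩ := hy; exact hz i
    | one => group
    | mul y z _ _ hy hz' => exact (Commute.mul_right hy hz' :)
    | inv y _ hy => exact (Commute.inv_right hy :)
  have := center_triv _ hcomm
  have : g = h * 1 := by rw [← this]; group
  simpa using this

private abbrev A := {σ : Fin 6 → G3 // Q σ}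

private lemma cardA : Nat.card A = 240 := by
  classical
  set Full := {σ : Fin 6 → G3 // (∀ i, (σ i).IsSwap) ∧ (List.ofFn σ).prod = 1} with hFull
  have hsum : Nat.card Full =
      Nat.card {s : Full // ∃ c, ∀ i, s.1 i = c} +
      Nat.card {s : Full // ¬ ∃ c, ∀ i, s.1 i = c} := by
    rw [← Nat.card_sum]
    exact (Nat.card_congr (Equiv.sumCompl _)).symm
  have h1 : Nat.card {s : Full // ∃ c, ∀ i, s.1 i = c} = 3 := by
    have e := Equiv.subtypeSubtypeEquivSubtypeInter
      (fun σ : Fin 6 → G3 => (∀ i, (σ i).IsSwap) ∧ (List.ofFn σ).prod = 1)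
      (fun σ : Fin 6 → G3 => ∃ c, ∀ i, σ i = c)
    rw [Nat.card_congr e]
    refine Eq.trans ?_ card3
    exact Nat.card_congr (Equiv.subtypeEquivRight (fun σ => by tauto))
  have h2 : Nat.card {s : Full // ¬ ∃ c, ∀ i, s.1 i = c} = Nat.card A := by
    have e := Equiv.subtypeSubtypeEquivSubtypeInter
      (fun σ : Fin 6 → G3 => (∀ i, (σ i).IsSwap) ∧ (List.ofFn σ).prod = 1)
      (fun σ : Fin 6 → G3 => ¬ ∃ c, ∀ i, σ i = c)
    rw [Nat.card_congr e]
    apply Nat.card_congr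
    exact Equiv.subtypeEquivRight (fun σ =>
      ⟨fun ⟨⟨a, b⟩, c⟩ => ⟨a, b, c⟩, fun ⟨a, b, c⟩ => ⟨⟨a, b⟩, c⟩⟩)
  rw [card243, h1, h2] at hsum
  omega

private instance rA : Setoid A where
  r s t := ∃ g, t.1 = cnj g s.1
  iseqv := by
    constructor
    · exact fun s => ⟨1, (cnj_one s.1).symm⟩
    · rintro s t ⟨g, hg⟩
      exact ⟨g⁻¹, by rw [hg, cnj_cnj, inv_mul_cancel, cnj_one]⟩
    · rintro s t u ⟨g, hg⟩ ⟨h, hh⟩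
      exact ⟨h * g, by rw [hh, hg, cnj_cnj]⟩

private noncomputable def e6 : Quotient rA × G3 ≃ A := by
  apply Equiv.ofBijective (fun p => ⟨cnj p.2 p.1.out.1, Q_cnj _ p.1.out.2⟩)
  constructor
  · rintro ⟨q, g⟩ ⟨q', g'⟩ he
    have he' : cnj g q.out.1 = cnj g' q'.out.1 := congrArg Subtype.val he
    have hq : q = q' := by
      rw [← q.out_eq, ← q'.out_eq]
      apply Quotient.sound
      exact ⟨g'⁻¹ * g, by rw [← cnj_cnj, he', cnj_cnj, inv_mul_cancel, cnj_one]⟩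
    subst hq
    rw [free q.out.2 he']
  · intro a
    obtain ⟨g, hg⟩ : (⟦a⟧ : Quotient rA).out ≈ a := Quotient.exact (Quotient.out_eq _)
    exact ⟨(⟦a⟧, g), Subtype.ext hg.symm⟩

private def orb (σ : Fin 6 → G3) : Set (Fin 6 → G3) := {τ | ∃ g, τ = cnj g σ}

private lemma orb_cnj (g : G3) (σ : Fin 6 → G3) : orb (cnj g σ) = orb σ := by
  ext τ
  constructor
  · rintro ⟨h, rfl⟩; exact ⟨h * g, (cnj_cnj h g σ)⟩
  · rintro ⟨h, rfl⟩
    exact ⟨h * g⁻¹, by rw [cnj_cnj, inv_mul_cancel_right]⟩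

private abbrev T := {O : Set (Fin 6 → G3) // ∃ σ, Q σ ∧ O = orb σ}

private noncomputable def eT : Quotient rA ≃ T := by
  apply Equiv.ofBijective (fun q => ⟨orb q.out.1, q.out.1, q.out.2, rfl⟩)
  constructor
  · intro q q' he
    have he' : orb q.out.1 = orb q'.out.1 := congrArg Subtype.val he
    rw [← q.out_eq, ← q'.out_eq]
    apply Quotient.sound
    have : q'.out.1 ∈ orb q.out.1 := by rw [he']; exact ⟨1, (cnj_one _).symm⟩
    obtain ⟨g, hg⟩ := this
    exact ⟨g, hg⟩
  · rintro ⟨O, σ, hQ, rfl⟩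
    refine ⟨⟦⟨σ, hQ⟩⟧, Subtype.ext ?_⟩
    obtain ⟨g, hg⟩ : (⟦(⟨σ, hQ⟩ : A)⟧ : Quotient rA).out ≈ ⟨σ, hQ⟩ :=
      Quotient.exact (Quotient.out_eq _)
    have hg' : σ = cnj g (⟦(⟨σ, hQ⟩ : A)⟧ : Quotient rA).out.1 := hg
    dsimp only
    rw [show orb σ = orb (cnj g (⟦(⟨σ, hQ⟩ : A)⟧ : Quotient rA).out.1) from by rw [← hg'],
      orb_cnj]

private lemma cardT : Nat.card T = 40 := by
  have h1 : Nat.card (Quotient rA × G3) = 240 := by rw [Nat.card_congr e6, cardA]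
  rw [Nat.card_prod] at h1
  have hG : Nat.card G3 = 6 := by rw [Nat.card_eq_fintype_card]; decide
  rw [hG] at h1
  rw [← Nat.card_congr eT]
  omega

/-- Among 6-tuples of transpositions in `S₃` with product 1: there are exactly
`3⁵ = 243` of them; exactly 3 are constant; the remaining 240 each generate all
of `S₃`; and the number of orbits of those 240 tuples under simultaneous
conjugation is `240/6 = 40`. -/
theorem stmt15 :
    Nat.card {σ : Fin 6 → Equiv.Perm (Fin 3) //
      (∀ i, (σ i).IsSwap) ∧ (List.ofFn σ).prod = 1} = 243 ∧
    Nat.card {σ : Fin 6 → Equiv.Perm (Fin 3) //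
      (∀ i, (σ i).IsSwap) ∧ (List.ofFn σ).prod = 1 ∧ ∃ c, ∀ i, σ i = c} = 3 ∧
    (∀ σ : Fin 6 → Equiv.Perm (Fin 3), (∀ i, (σ i).IsSwap) →
      (List.ofFn σ).prod = 1 → (¬ ∃ c, ∀ i, σ i = c) →
      Subgroup.closure (Set.range σ) = (⊤ : Subgroup (Equiv.Perm (Fin 3)))) ∧
    Nat.card {O : Set (Fin 6 → Equiv.Perm (Fin 3)) //
      ∃ σ : Fin 6 → Equiv.Perm (Fin 3), (∀ i, (σ i).IsSwap) ∧
        (List.ofFn σ).prod = 1 ∧ (¬ ∃ c, ∀ i, σ i = c) ∧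
        O = {τ | ∃ g : Equiv.Perm (Fin 3), τ = fun i => g * σ i * g⁻¹}} = 40 := by
  refine ⟨card243, card3, fun σ h1 _ h3 => part3 σ h1 h3, ?_⟩
  rw [← cardT]
  apply Nat.card_congr
  apply Equiv.subtypeEquivRight
  intro O
  constructor
  · rintro ⟨σ, h1, h2, h3, h4⟩
    exact ⟨σ, ⟨h1, h2, h3⟩, h4⟩
  · rintro ⟨σ, ⟨h1, h2, h3⟩, h4⟩
    exact ⟨σ, h1, h2, h3, h4⟩
end
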